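/- arXiv:2401.14862 — 3 statements merged into one kernel-verified Lean document; each statement's English description precedes it below -/
import Mathlib

section
/- An automorphism γ of the infinite rooted binary tree is an odometer (i.e., acts as a single 2^n-cycle on each level n) if and only if for every n ≥ 1 the sign of the permutation induced by γ on level n is −1. -/
namespace BinTree

/-- Vertices of the infinite rooted binary tree: finite words over `{0,1}`. -/
abbrev Vertex : Type := List Bool

/-- A function on vertices is a tree automorphism function if it preserves lengths
(levels) and prefixes. -/
def IsTreeAutFun (f : Vertex → Vertex) : Prop :=
  (∀ v, (f v).length = v.length) ∧ ∀ v w : Vertex, (f (v ++ w)).take v.length = f v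

/-- `Ω`: the automorphism group of the infinite rooted binary tree, realized as the
subgroup of permutations of the set of vertices preserving the tree structure. -/
def TreeAut : Subgroup (Equiv.Perm Vertex) where
  carrier := {e | IsTreeAutFun ⇑e}
  one_mem' := ⟨fun _ => rfl, fun v w => by
    simpa using List.take_left (l₁ := v) (l₂ := w)⟩
  mul_mem' := by
    rintro a b ha hb
    obtain ⟨ha1, ha2⟩ := ha
    obtain ⟨hb1, hb2⟩ := hb
    refine ⟨fun v => ?_, fun v w => ?_⟩
    · simp [Equiv.Perm.mul_apply, ha1, hb1]
    · have hb' : b (v ++ w) = b v ++ (b (v ++ w)).drop v.length := by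
        conv_lhs => rw [← List.take_append_drop v.length (b (v ++ w)), hb2]
      have hlen : (b v).length = v.length := hb1 v
      calc ((a * b) (v ++ w)).take v.length
          = (a (b v ++ (b (v ++ w)).drop v.length)).take v.length := by
            rw [Equiv.Perm.mul_apply, ← hb']
        _ = a (b v) := by rw [← hlen]; exact ha2 _ _
        _ = (a * b) v := rfl
  inv_mem' := by
    intro a ha
    obtain ⟨ha1, ha2⟩ := ha
    show IsTreeAutFun ⇑a⁻¹
    have hlen : ∀ v : Vertex, (a⁻¹ v).length = v.length := by
      intro v
      have h := ha1 (a⁻¹ v)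
      rw [show ∀ x, a (a⁻¹ x) = x from fun x => Equiv.apply_symm_apply a x] at h
      exact h.symm ▸ rfl
    refine ⟨hlen, fun v w => ?_⟩
    have htl : ((a⁻¹ (v ++ w)).take v.length).length = v.length := by
      rw [List.length_take, hlen, List.length_append]
      omega
    have key : a ((a⁻¹ (v ++ w)).take v.length) = v := by
      have h2 := ha2 ((a⁻¹ (v ++ w)).take v.length) ((a⁻¹ (v ++ w)).drop v.length)
      rw [List.take_append_drop, htl, show ∀ x, a (a⁻¹ x) = x from fun x => Equiv.apply_symm_apply a x] at h2
      rw [← h2]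
      simpa using List.take_left (l₁ := v) (l₂ := w)
    have h3 := congrArg (⇑a⁻¹) key
    rwa [show ∀ x, a⁻¹ (a x) = x from fun x => Equiv.symm_apply_apply a x] at h3

/-- wreath recursion, forward map: `(g,h)σᵗ` -/
def wrFun (g h : Vertex → Vertex) (t : Bool) : Vertex → Vertex
  | [] => []
  | x :: v => (xor x t) :: (cond x (h v) (g v))

/-- wreath recursion, inverse map -/
def wrFunInv (g h : Vertex → Vertex) (t : Bool) : Vertex → Vertex
  | [] => []
  | y :: w => (xor y t) :: (cond (xor y t) (h w) (g w))

/-- `(g,h)σᵗ` as a permutation of the vertices. -/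
def wrPerm (g h : Equiv.Perm Vertex) (t : Bool) : Equiv.Perm Vertex where
  toFun := wrFun ⇑g ⇑h t
  invFun := wrFunInv ⇑g.symm ⇑h.symm t
  left_inv := by
    intro v
    cases v with
    | nil => rfl
    | cons x v => cases x <;> cases t <;> simp [wrFun, wrFunInv]
  right_inv := by
    intro v
    cases v with
    | nil => rfl
    | cons x v => cases x <;> cases t <;> simp [wrFun, wrFunInv]

/-- The element `(g,h)σᵗ` of `Ω`: acts on the first level by `σᵗ` (where `σ` is the
swap of the two level-one subtrees), with section `g` at the vertex `0` and section
`h` at the vertex `1`.  Thus `(γ₀,γ₁)τ` of the wreath recursion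
`Ω ≃ (Ω × Ω) ⋊ S₂` is `wr γ₀ γ₁ t` (`t = true` iff `τ = σ`). -/
def wr (g h : TreeAut) (t : Bool) : TreeAut :=
  ⟨wrPerm g.1 h.1 t, by
    have hg : IsTreeAutFun ⇑g.1 := g.2
    have hh : IsTreeAutFun ⇑h.1 := h.2
    constructor
    · intro v
      cases v with
      | nil => rfl
      | cons x v =>
        cases x <;> simp [wrPerm, wrFun, hg.1, hh.1]
    · intro v w
      cases v with
      | nil => simp [wrPerm, wrFun]
      | cons x v =>
        cases x <;> simp [wrPerm, wrFun, hg.2, hh.2]⟩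

/-- Application of a tree automorphism to a vertex. -/
def ap (γ : TreeAut) (v : Vertex) : Vertex := γ.1 v

/-- The permutation induced by `γ ∈ Ω` on level `n` of the tree. -/
def levelPerm (n : ℕ) (γ : TreeAut) : Equiv.Perm (List.Vector Bool n) where
  toFun v := ⟨γ.1 v.1, by
    have h : IsTreeAutFun ⇑γ.1 := γ.2
    rw [h.1 v.1]; exact v.2⟩
  invFun v := ⟨γ.1.symm v.1, by
    have h : IsTreeAutFun ⇑γ.1 := γ.2
    have h2 := h.1 (γ.1.symm v.1)
    rw [Equiv.apply_symm_apply] at h2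
    exact h2.symm.trans v.2⟩
  left_inv v := Subtype.ext (Equiv.symm_apply_apply _ _)
  right_inv v := Subtype.ext (Equiv.apply_symm_apply _ _)

/-- Restriction to level `n` as a group homomorphism. -/
def levelHom (n : ℕ) : TreeAut →* Equiv.Perm (List.Vector Bool n) where
  toFun := levelPerm n
  map_one' := Equiv.ext fun v => Subtype.ext rfl
  map_mul' := fun g h => Equiv.ext fun v => Subtype.ext rfl

/-- `sgn_n`: the sign of the permutation induced on level `n`. -/
def sgn (n : ℕ) (γ : TreeAut) : ℤˣ := Equiv.Perm.sign (levelPerm n γ)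

/-- An odometer: acts as a single `2^n`-cycle on each level `n ≥ 1`. -/
def IsOdometer (γ : TreeAut) : Prop :=
  ∀ n : ℕ, 1 ≤ n → (levelPerm n γ).IsCycle ∧ (levelPerm n γ).support = Finset.univ

/-- The profinite topology on `Ω`: the coarsest topology making all level
restrictions (to the discrete finite groups) continuous. -/
instance : TopologicalSpace TreeAut :=
  ⨅ n : ℕ, TopologicalSpace.induced (levelPerm n) ⊥

/-- A vertex `w` is in a stable cycle of `γ` of length `k`: its `γ`-orbit has exactly
`k` elements, and for every level `m` above the level of `w`, all level-`m` vertices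
lying above this orbit are in one single `γ`-cycle (necessarily of length
`2^(m - n) * k`, which we record via the periodicity condition). -/
def InStableCycle (γ : TreeAut) (w : Vertex) (k : ℕ) : Prop :=
  0 < k ∧ ap (γ ^ k) w = w ∧ (∀ j : ℕ, 0 < j → j < k → ap (γ ^ j) w ≠ w) ∧
  (∀ u : Vertex, w.length < u.length → (∃ i : ℕ, u.take w.length = ap (γ ^ i) w) →
    (ap (γ ^ (2 ^ (u.length - w.length) * k)) u = u ∧
      ∀ u' : Vertex, u'.length = u.length →
        (∃ i : ℕ, u'.take w.length = ap (γ ^ i) w) → ∃ j : ℕ, ap (γ ^ j) u = u'))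

/-- Self-similar subgroup: closed under taking sections (here the section of `γ` at
the first-level vertex `x` is characterized by `(xv)γ = (x)γ ⬝ (v)γₓ`). -/
def SelfSimilar (H : Subgroup TreeAut) : Prop :=
  ∀ γ ∈ H, ∀ x : Bool, ∀ δ : TreeAut,
    (∀ v : Vertex, ap γ (x :: v) = ap γ [x] ++ ap δ v) → δ ∈ H



end BinTree

/-!
By induction on `n`, `γ` acts transitively on every level `n` once all `sgn n γ` are `-1`.
If it is transitive on level `n`, every vertex of level `n + 1` lies in the cycle of a fixed
vertex `v` or of its sibling, and `γ` commutes with exchanging siblings. Were these two cycles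
distinct, the level-`n + 1` permutation would be the product of the cycle of `v` and its
conjugate, hence even. Conversely, a `2 ^ n`-cycle is odd.
-/

namespace Equiv.Perm

variable {α : Type*} [Fintype α] [DecidableEq α]

theorem sign_eq_one_of_commute_of_two_cycles {τ s : Perm α} (hs : Commute s τ) {v : α}
    (hcover : ∀ x, τ.SameCycle v x ∨ τ.SameCycle (s v) x) (hdisj : ¬ τ.SameCycle v (s v)) :
    sign τ = 1 := by
  have hconj : s * τ.cycleOf v * s⁻¹ = τ.cycleOf (s v) := by
    have hτ : s * τ * s⁻¹ = τ := by rw [hs.eq, mul_inv_cancel_right]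
    have hiff (x : α) : τ.SameCycle v (s⁻¹ x) ↔ τ.SameCycle (s v) x := by
      simpa [hτ] using (sameCycle_conj (f := τ) (g := s) (x := s v) (y := x)).symm
    ext x
    simp only [mul_apply, cycleOf_apply, hiff]
    split_ifs
    · rw [← mul_apply s τ, hs.eq, mul_apply, ← mul_apply s, mul_inv_cancel, one_apply]
    · rw [← mul_apply, mul_inv_cancel, one_apply]
  have hsplit : τ = τ.cycleOf v * τ.cycleOf (s v) := by
    ext x
    rcases hcover x with hx | hx
    · have hx' : ¬ τ.SameCycle (s v) x := fun h => hdisj (hx.trans h.symm)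
      rw [mul_apply, cycleOf_apply_of_not_sameCycle hx', hx.cycleOf_apply]
    · have hτx : ¬ τ.SameCycle v (τ x) := fun h =>
        hdisj (h.trans (hx.trans (sameCycle_apply_right.mpr .rfl)).symm)
      rw [mul_apply, hx.cycleOf_apply, cycleOf_apply_of_not_sameCycle hτx]
  rw [hsplit, map_mul, ← hconj, map_mul, map_mul, map_inv, mul_inv_cancel_comm,
    Int.units_mul_self]

theorem isCycle_and_support_eq_univ_of_forall_sameCycle [Nontrivial α] {σ : Perm α}
    (hσ : ∀ x y, σ.SameCycle x y) : σ.IsCycle ∧ σ.support = Finset.univ := by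
  have hmove : ∀ x, σ x ≠ x := fun x hx => by
    obtain ⟨y, hy⟩ := exists_ne x
    exact hy ((hσ x y).eq_of_left hx).symm
  obtain ⟨x⟩ := ‹Nontrivial α›.to_nonempty
  exact ⟨⟨x, hmove x, fun y _ => hσ x y⟩,
    Finset.eq_univ_of_forall fun y => mem_support.mpr (hmove y)⟩

end Equiv.Perm

namespace BinTree

open Equiv.Perm

variable {n : ℕ}

def parent (v : List.Vector Bool (n + 1)) : List.Vector Bool n :=
  ⟨v.1.take n, by simp [v.2]⟩

def sibling (v : List.Vector Bool (n + 1)) : List.Vector Bool (n + 1) :=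
  ⟨v.1.modify n not, by simp [v.2]⟩

lemma sibling_sibling (v : List.Vector Bool (n + 1)) : sibling (sibling v) = v := by
  refine Subtype.ext (List.ext_getElem (by simp [sibling]) fun i _ _ => ?_)
  simp only [sibling, List.getElem_modify]
  split_ifs <;> simp

lemma sibling_ne (v : List.Vector Bool (n + 1)) : sibling v ≠ v := fun h => by
  have := congrArg (fun w : List.Vector Bool (n + 1) => w.1[n]?) h
  simp [sibling] at this

lemma parent_sibling (v : List.Vector Bool (n + 1)) : parent (sibling v) = parent v :=
  Subtype.ext (by simp [parent, sibling, List.take_modify, List.modify_eq_self])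

lemma eq_or_eq_sibling_of_parent_eq {v w : List.Vector Bool (n + 1)}
    (h : parent w = parent v) : w = v ∨ w = sibling v := by
  have hw : w.1.length = n + 1 := w.2
  have hv : v.1.length = n + 1 := v.2
  have hinit (i : ℕ) (hi : i < n) : w.1[i]'(by omega) = v.1[i]'(by omega) := by
    have := congrArg (fun u : List.Vector Bool n => u.1[i]?) h
    simpa [parent, List.getElem?_take, hi, List.getElem?_eq_getElem, hw, hv,
      show i < n + 1 by omega] using this
  by_cases hlast : w.1[n]'(by omega) = v.1[n]'(by omega)
  · refine .inl (Subtype.ext (List.ext_getElem (by simp [hw, hv]) fun i _ _ => ?_))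
    rcases Nat.lt_or_ge i n with hi | hi
    · exact hinit i hi
    · obtain rfl : i = n := by omega
      exact hlast
  · refine .inr (Subtype.ext (List.ext_getElem (by simp [sibling, hw, hv]) fun i _ _ => ?_))
    simp only [sibling, List.getElem_modify]
    rcases Nat.lt_or_ge i n with hi | hi
    · rw [if_neg hi.ne']
      exact hinit i hi
    · obtain rfl : i = n := by omega
      rw [if_pos rfl]
      exact Bool.eq_not.mpr hlast

lemma parent_levelPerm (γ : TreeAut) (v : List.Vector Bool (n + 1)) :
    parent (levelPerm (n + 1) γ v) = levelPerm n γ (parent v) := by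
  have h := (γ.2 : IsTreeAutFun γ.1).2 (v.1.take n) (v.1.drop n)
  rw [List.take_append_drop, List.length_take_of_le (by simp [v.2])] at h
  exact Subtype.ext h

lemma levelPerm_sibling (γ : TreeAut) (v : List.Vector Bool (n + 1)) :
    levelPerm (n + 1) γ (sibling v) = sibling (levelPerm (n + 1) γ v) := by
  refine (eq_or_eq_sibling_of_parent_eq ?_).resolve_left ?_
  · rw [parent_levelPerm, parent_levelPerm, parent_sibling]
  · exact fun h => sibling_ne v ((levelPerm (n + 1) γ).injective h)

variable (n) in
def siblingPerm : Equiv.Perm (List.Vector Bool (n + 1)) :=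
  Function.Involutive.toPerm sibling sibling_sibling

lemma commute_siblingPerm_levelPerm (γ : TreeAut) :
    Commute (siblingPerm n) (levelPerm (n + 1) γ) :=
  Equiv.ext fun v => (levelPerm_sibling γ v).symm

lemma sameCycle_levelPerm_succ (γ : TreeAut) (hρ : ∀ x y, (levelPerm n γ).SameCycle x y)
    (hsgn : sgn (n + 1) γ = -1) (x y : List.Vector Bool (n + 1)) :
    (levelPerm (n + 1) γ).SameCycle x y := by
  set τ := levelPerm (n + 1) γ
  have hcover : ∀ w, τ.SameCycle x w ∨ τ.SameCycle (siblingPerm n x) w := by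
    intro w
    obtain ⟨i, hi⟩ := (hρ (parent x) (parent w)).exists_nat_pow_eq
    have hsemi : Function.Semiconj parent τ (levelPerm n γ) := parent_levelPerm γ
    rw [coe_pow, ← hsemi.iterate_right i, ← coe_pow] at hi
    rcases eq_or_eq_sibling_of_parent_eq hi.symm with hw | hw
    · exact .inl ⟨i, by rw [zpow_natCast, hw]⟩
    · refine .inr ⟨i, ?_⟩
      rw [zpow_natCast, hw]
      exact (DFunLike.congr_fun ((commute_siblingPerm_levelPerm γ).pow_right i).eq x).symm
  by_cases hx : τ.SameCycle x (siblingPerm n x)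
  · rcases hcover y with hy | hy
    exacts [hy, hx.trans hy]
  · have heven := sign_eq_one_of_commute_of_two_cycles (commute_siblingPerm_levelPerm γ) hcover hx
    exact absurd (hsgn.symm.trans heven) (by decide)

lemma sameCycle_levelPerm_of_sgn_eq_neg_one (γ : TreeAut)
    (hsgn : ∀ n : ℕ, 1 ≤ n → sgn n γ = -1) :
    ∀ (n : ℕ) (x y : List.Vector Bool n), (levelPerm n γ).SameCycle x y
  | 0, x, y => Subsingleton.elim x y ▸ .refl _ _
  | n + 1, x, y => sameCycle_levelPerm_succ γ (sameCycle_levelPerm_of_sgn_eq_neg_one γ hsgn n)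
      (hsgn (n + 1) n.succ_pos) x y

/-- `γ ∈ Ω` is an odometer iff `sgn_n(γ) = -1` for all `n ≥ 1`. -/
theorem odometer_iff_sgn_neg_one (γ : TreeAut) :
    IsOdometer γ ↔ ∀ n : ℕ, 1 ≤ n → sgn n γ = -1 := by
  constructor
  · intro h n hn
    obtain ⟨hcycle, hsupp⟩ := h n hn
    have heven : Even (2 ^ n) := Nat.even_pow.mpr ⟨even_two, by omega⟩
    rw [sgn, hcycle.sign, hsupp, Finset.card_univ, card_vector, Fintype.card_bool,
      heven.neg_one_pow]
  · intro h n hn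
    have : Nontrivial (List.Vector Bool n) := by
      rw [← Fintype.one_lt_card_iff_nontrivial, card_vector, Fintype.card_bool]
      exact Nat.one_lt_two_pow_iff.mpr (by omega)
    exact isCycle_and_support_eq_univ_of_forall_sameCycle
      (sameCycle_levelPerm_of_sgn_eq_neg_one γ h n)

end BinTree
end

section
/- For the recursively defined generators a₁,…,a_r with parameters r ≥ 3 and 1 < s ≤ r, the sign of a_i on level n satisfies: sgn_n(a_i) = −1 if n ≡ i (mod r) or n ≡ i + 1 − s (mod r), and sgn_n(a_i) = +1 otherwise. -/
namespace ZMod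

theorem natCast_injOn_Icc (r : ℕ) : Set.InjOn (Nat.cast : ℕ → ZMod r) (Set.Icc 1 r) := by
  rintro i ⟨hi1, hir⟩ j ⟨hj1, hjr⟩ hij
  have hpred : ((i - 1 : ℕ) : ZMod r) = ((j - 1 : ℕ) : ZMod r) := by
    rwa [Nat.cast_pred hi1, Nat.cast_pred hj1, sub_left_inj]
  rw [natCast_eq_natCast_iff', Nat.mod_eq_of_lt (by omega), Nat.mod_eq_of_lt (by omega)] at hpred
  omega

theorem natCast_surjOn_Icc (r : ℕ) [NeZero r] :
    Set.SurjOn (Nat.cast : ℕ → ZMod r) (Set.Icc 1 r) Set.univ := by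
  intro j _
  refine ⟨(j - 1).val + 1, ⟨by omega, (j - 1).val_lt⟩, ?_⟩
  rw [Nat.cast_succ, natCast_zmod_val, sub_add_cancel]

end ZMod

namespace BinTree

def vectorConsEquiv (n : ℕ) : Bool × List.Vector Bool n ≃ List.Vector Bool (n + 1) where
  toFun p := p.1 ::ᵥ p.2
  invFun v := (v.head, v.tail)
  left_inv p := by simp
  right_inv v := v.cons_head_tail

/-- `σᵗ`, as it acts on the first letter of a word. -/
def firstLetterPerm (t : Bool) : Equiv.Perm Bool := cond t (Equiv.swap false true) 1

theorem sign_firstLetterPerm (t : Bool) :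
    Equiv.Perm.sign (firstLetterPerm t) = if t then -1 else 1 := by
  cases t <;> simp [firstLetterPerm]

theorem levelPerm_succ_wr (n : ℕ) (g h : TreeAut) (t : Bool) :
    levelPerm (n + 1) (wr g h t) = (vectorConsEquiv n).permCongr
      (Equiv.prodCongrLeft (fun _ => firstLetterPerm t) *
        Equiv.prodCongrRight (fun x => cond x (levelPerm n h) (levelPerm n g))) := by
  ext ⟨_ | ⟨x, v⟩, hv⟩ : 2
  · simp at hv
  · cases x <;> cases t <;> rfl

theorem sgn_one (n : ℕ) : sgn n 1 = 1 :=
  map_one (Equiv.Perm.sign.comp (levelHom n))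

theorem sgn_zero (γ : TreeAut) : sgn 0 γ = 1 := by
  rw [sgn, Subsingleton.elim (levelPerm 0 γ) 1, map_one]

theorem sgn_succ_wr (n : ℕ) (g h : TreeAut) (t : Bool) :
    sgn (n + 1) (wr g h t) = (if t then -1 else 1) ^ 2 ^ n * (sgn n g * sgn n h) := by
  rw [sgn, levelPerm_succ_wr, Equiv.Perm.sign_permCongr, map_mul, Equiv.Perm.sign_prodCongrLeft,
    Equiv.Perm.sign_prodCongrRight, Finset.prod_const, Finset.card_univ, card_vector,
    Fintype.card_bool, Fintype.prod_bool, sign_firstLetterPerm, mul_comm (sgn n g)]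
  rfl

theorem sgn_one_wr (g h : TreeAut) (t : Bool) : sgn 1 (wr g h t) = if t then -1 else 1 := by
  rw [sgn_succ_wr, sgn_zero, sgn_zero, pow_zero, pow_one, mul_one, mul_one]

theorem sgn_succ_wr_of_ne_zero {n : ℕ} (hn : n ≠ 0) (g h : TreeAut) (t : Bool) :
    sgn (n + 1) (wr g h t) = sgn n g * sgn n h := by
  have h2n : Even (2 ^ n) := (Nat.even_pow' hn).mpr even_two
  cases t <;> simp [sgn_succ_wr, h2n.neg_one_pow]

theorem sgn_succ_eq_of_wr_sub_one {G : Type*} [AddGroupWithOne G] (b : G → TreeAut)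
    (t : G → Bool) (hb : ∀ j, b j = wr (b (j - 1)) 1 (t j) ∨ b j = wr 1 (b (j - 1)) (t j))
    (n : ℕ) (j : G) : sgn (n + 1) (b j) = if t (j - n) then -1 else 1 := by
  induction n generalizing j with
  | zero => rcases hb j with h | h <;> rw [h, sgn_one_wr, Nat.cast_zero, sub_zero]
  | succ n ih =>
    have hsub : j - 1 - n = j - (n + 1 : ℕ) := by
      rw [Nat.cast_succ, sub_add_eq_sub_sub_swap]
    rcases hb j with h | h <;>
      simp only [h, sgn_succ_wr_of_ne_zero n.succ_ne_zero, ih, sgn_one, hsub, mul_one, one_mul]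

theorem generators_eq_wr {r s : ℕ} (hs1 : 1 < s) (hsr : s ≤ r) {a : ZMod r → TreeAut}
    (ha1 : a 1 = wr (a (r : ZMod r)) 1 true)
    (hmid : ∀ i : ℕ, 2 ≤ i → i ≤ s - 1 → a (i : ZMod r) = wr 1 (a ((i - 1 : ℕ) : ZMod r)) false)
    (has : a (s : ZMod r) = wr 1 (a ((s - 1 : ℕ) : ZMod r)) true)
    (hhi : ∀ i : ℕ, s + 1 ≤ i → i ≤ r → a (i : ZMod r) = wr (a ((i - 1 : ℕ) : ZMod r)) 1 false)
    (j : ZMod r) :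
    a j = wr (a (j - 1)) 1 (decide (j = 1 ∨ j = s)) ∨
      a j = wr 1 (a (j - 1)) (decide (j = 1 ∨ j = s)) := by
  have : NeZero r := ⟨by omega⟩
  obtain ⟨i, ⟨hi1, hir⟩, rfl⟩ := ZMod.natCast_surjOn_Icc r (Set.mem_univ j)
  have hpred : ((i - 1 : ℕ) : ZMod r) = i - 1 := Nat.cast_pred hi1
  have hflag (h1 : i ≠ 1) (hs : i ≠ s) :
      decide ((i : ZMod r) = 1 ∨ (i : ZMod r) = s) = false := by
    have hinj := ZMod.natCast_injOn_Icc r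
    rw [decide_eq_false_iff_not, ← Nat.cast_one, hinj.eq_iff ⟨hi1, hir⟩ ⟨le_rfl, by omega⟩,
      hinj.eq_iff ⟨hi1, hir⟩ ⟨by omega, hsr⟩]
    omega
  rcases (by omega : i = 1 ∨ i = s ∨ (2 ≤ i ∧ i ≤ s - 1) ∨ s + 1 ≤ i) with
    rfl | rfl | ⟨hi2, his⟩ | his
  · left
    rw [Nat.cast_one, ha1, sub_self, ZMod.natCast_self]
    simp
  · right
    rw [has, hpred]
    simp
  · right
    rw [hmid i hi2 his, hpred, hflag (by omega) (by omega)]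
  · left
    rw [hhi i his hir, hpred, hflag (by omega) (by omega)]

theorem sgn_gens_general
    (r s : ℕ) (hs1 : 1 < s) (hsr : s ≤ r)
    (a : ZMod r → TreeAut)
    (ha1 : a 1 = wr (a (r : ZMod r)) 1 true)
    (hmid : ∀ i : ℕ, 2 ≤ i → i ≤ s - 1 → a (i : ZMod r) = wr 1 (a ((i - 1 : ℕ) : ZMod r)) false)
    (has : a (s : ZMod r) = wr 1 (a ((s - 1 : ℕ) : ZMod r)) true)
    (hhi : ∀ i : ℕ, s + 1 ≤ i → i ≤ r → a (i : ZMod r) = wr (a ((i - 1 : ℕ) : ZMod r)) 1 false)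
    :
    ∀ i : ℕ, 1 ≤ i → i ≤ r → ∀ n : ℕ, 1 ≤ n →
      sgn n (a (i : ZMod r)) =
        (if (n : ZMod r) = (i : ZMod r) ∨ (n : ZMod r) = (i : ZMod r) + 1 - (s : ZMod r)
          then -1 else 1) := by
  intro i _ _ n hn
  obtain ⟨m, rfl⟩ := Nat.exists_eq_add_of_le' hn
  have hshift (c : ZMod r) : (i : ZMod r) - m = c ↔ ((m + 1 : ℕ) : ZMod r) = i + 1 - c := by
    push_cast
    constructor <;> intro h <;> linear_combination -h
  rw [sgn_succ_eq_of_wr_sub_one a _ (generators_eq_wr hs1 hsr ha1 hmid has hhi) m]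
  simp only [decide_eq_true_eq, hshift, add_sub_cancel_right]

/-- sgn_n(a_i) = −1 iff n ≡ i or n ≡ i + 1 − s (mod r). -/
theorem sgn_gens
    (r s : ℕ) (hr : 3 ≤ r) (hs1 : 1 < s) (hsr : s ≤ r)
    (a : ZMod r → TreeAut)
    (ha1 : a 1 = wr (a (r : ZMod r)) 1 true)
    (hmid : ∀ i : ℕ, 2 ≤ i → i ≤ s - 1 → a (i : ZMod r) = wr 1 (a ((i - 1 : ℕ) : ZMod r)) false)
    (has : a (s : ZMod r) = wr 1 (a ((s - 1 : ℕ) : ZMod r)) true)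
    (hhi : ∀ i : ℕ, s + 1 ≤ i → i ≤ r → a (i : ZMod r) = wr (a ((i - 1 : ℕ) : ZMod r)) 1 false)
    :
    ∀ i : ℕ, 1 ≤ i → i ≤ r → ∀ n : ℕ, 1 ≤ n →
      sgn n (a (i : ZMod r)) =
        (if (n : ZMod r) = (i : ZMod r) ∨ (n : ZMod r) = (i : ZMod r) + 1 - (s : ZMod r)
          then -1 else 1) :=
  sgn_gens_general r s hs1 hsr a ha1 hmid has hhi

end BinTree
end

section
/- Let G be a closed subgroup of Ω, and let H be a closed subgroup of G such that the level-n quotient G_n/H_n is cyclic for all n ≥ 1. Then the order of G_{n+1}/H_{n+1} is at most twice the order of G_n/H_n, where G_n, H_n denote the images of G, H in the automorphism group Ω_n of the finite tree of depth n. -/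
theorem IsCyclic.card_le_of_forall_pow_eq_one {C : Type*} [Group C] [IsCyclic C] {k : ℕ}
    (hk : 0 < k) (h : ∀ c : C, c ^ k = 1) : Nat.card C ≤ k :=
  IsCyclic.exponent_eq_card (α := C) ▸
    Nat.le_of_dvd hk (Monoid.exponent_dvd_of_forall_pow_eq_one h)

theorem Bool.apply_apply_of_injective {f : Bool → Bool} (hf : Function.Injective f) (b : Bool) :
    f (f b) = b := by
  revert f b
  decide

namespace Subgroup

variable {Γ : Type*} [Group Γ]

theorem le_normalizer_of_forall_conj_mem {H G : Subgroup Γ}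
    (h : ∀ g ∈ G, ∀ x ∈ H, g * x * g⁻¹ ∈ H) : G ≤ normalizer (H : Set Γ) := by
  intro g hg x
  refine ⟨h g hg x, fun hx => ?_⟩
  simpa [mul_assoc] using h g⁻¹ (inv_mem hg) _ hx

theorem le_normalizer_sup {H N G : Subgroup Γ} [N.Normal] (hG : G ≤ normalizer (H : Set Γ)) :
    G ≤ normalizer ((H ⊔ N : Subgroup Γ) : Set Γ) :=
  (le_inf hG (normalizer_eq_top_iff.2 ‹_› ▸ le_top)).trans
    (normalizer_inf_normalizer_le_normalizer_sup H N)

theorem isCyclic_quotient_subgroupOf {A G : Subgroup Γ} [(A.subgroupOf G).Normal] {g : Γ}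
    (hg : g ∈ G) (hgen : ∀ x ∈ G, ∃ m : ℤ, x * (g ^ m)⁻¹ ∈ A) :
    IsCyclic (G ⧸ A.subgroupOf G) := by
  refine ⟨⟨QuotientGroup.mk ⟨g, hg⟩, fun q => ?_⟩⟩
  induction q using QuotientGroup.induction_on with | H x => ?_
  obtain ⟨m, hm⟩ := hgen x x.2
  refine ⟨m, ?_⟩
  change (QuotientGroup.mk ⟨g, hg⟩ : G ⧸ A.subgroupOf G) ^ m = QuotientGroup.mk x
  rw [← QuotientGroup.mk_zpow, eq_comm, QuotientGroup.eq_iff_div_mem, mem_subgroupOf]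
  simpa [div_eq_mul_inv] using hm

theorem relIndex_le_mul_relIndex_of_pow_mem {A B G : Subgroup Γ} [(A.subgroupOf G).Normal]
    [IsCyclic (G ⧸ A.subgroupOf G)] (hAB : A ≤ B) {k : ℕ} (hk : 0 < k)
    (hpow : ∀ x ∈ B ⊓ G, x ^ k ∈ A) : A.relIndex G ≤ k * B.relIndex G := by
  let ψ : ↥(B ⊓ G) →* G ⧸ A.subgroupOf G :=
    (QuotientGroup.mk' _).comp (inclusion inf_le_right)
  have hker : ψ.ker = A.subgroupOf (B ⊓ G) := by
    ext x
    simp [ψ, mem_subgroupOf]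
  have hrange : Nat.card ψ.range ≤ k := by
    refine IsCyclic.card_le_of_forall_pow_eq_one hk ?_
    rintro ⟨_, x, rfl⟩
    ext
    simp [ψ, ← QuotientGroup.mk_pow, mem_subgroupOf, hpow x x.2]
  calc A.relIndex G = A.relIndex (B ⊓ G) * B.relIndex G := by
        rw [relIndex_inf_mul_relIndex, inf_eq_left.2 hAB]
    _ = Nat.card ψ.range * B.relIndex G := by rw [relIndex, ← hker, index_ker]
    _ ≤ k * B.relIndex G := Nat.mul_le_mul_right _ hrange

theorem sq_mem_sup_of_mem_sup {H N₀ N₁ : Subgroup Γ} [N₀.Normal]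
    (hsq : ∀ k ∈ N₀, k ^ 2 ∈ N₁) {x : Γ} (hx : x ∈ H ⊔ N₀) (hxH : x ∈ normalizer (H : Set Γ)) :
    x ^ 2 ∈ H ⊔ N₁ := by
  obtain ⟨h, hh, k, hk, rfl⟩ := mem_sup_of_normal_right.1 hx
  have hkH : k ∈ normalizer (H : Set Γ) := by
    simpa using mul_mem (inv_mem (le_normalizer hh)) hxH
  have hconj : k * h * k⁻¹ ∈ H := (mem_normalizer_iff.1 hkH h).1 hh
  have : (h * k) ^ 2 = h * (k * h * k⁻¹) * k ^ 2 := by simp only [sq]; group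
  rw [this]
  exact mul_mem (mem_sup_left (mul_mem hh hconj)) (mem_sup_right (hsq k hk))

theorem relIndex_sup_le_two_mul {H N₀ N₁ G : Subgroup Γ} [N₀.Normal]
    (hN : N₁ ≤ N₀) (hsq : ∀ k ∈ N₀, k ^ 2 ∈ N₁) (hG : G ≤ normalizer (H : Set Γ))
    [((H ⊔ N₁).subgroupOf G).Normal] [IsCyclic (G ⧸ (H ⊔ N₁).subgroupOf G)] :
    (H ⊔ N₁).relIndex G ≤ 2 * (H ⊔ N₀).relIndex G :=
  relIndex_le_mul_relIndex_of_pow_mem (sup_le_sup_left hN H) two_pos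
    fun _ hx => sq_mem_sup_of_mem_sup hsq hx.1 (hG hx.2)

theorem relIndex_map_map_eq_relIndex_sup_ker {Γ Δ : Type*} [Group Γ] [Group Δ] (f : Γ →* Δ)
    (H G : Subgroup Γ) : (H.map f).relIndex (G.map f) = (H ⊔ f.ker).relIndex G := by
  rw [← relIndex_comap, comap_map_eq]

theorem isCyclic_quotient_sup_ker {Γ Δ : Type*} [Group Γ] [Group Δ] (f : Γ →* Δ)
    {H G : Subgroup Γ} [((H ⊔ f.ker).subgroupOf G).Normal]
    (hgen : ∃ g ∈ G.map f, ∀ x ∈ G.map f, ∃ m : ℤ, x * (g ^ m)⁻¹ ∈ H.map f) :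
    IsCyclic (G ⧸ (H ⊔ f.ker).subgroupOf G) := by
  obtain ⟨_, ⟨g, hg, rfl⟩, hgen⟩ := hgen
  refine isCyclic_quotient_subgroupOf hg fun x hx => ?_
  obtain ⟨m, hm⟩ := hgen (f x) (mem_map_of_mem f hx)
  refine ⟨m, ?_⟩
  rw [← comap_map_eq, mem_comap]
  simpa using hm

end Subgroup

namespace BinTree

open Subgroup

theorem levelHom_eq_one_iff {n : ℕ} {γ : TreeAut} :
    levelHom n γ = 1 ↔ ∀ v : Vertex, v.length = n → ap γ v = v :=
  ⟨fun h v hv => congrArg Subtype.val (Equiv.ext_iff.1 h ⟨v, hv⟩),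
    fun h => Equiv.ext fun v => Subtype.ext (h v.1 v.2)⟩

theorem ap_take {γ : TreeAut} (v w : Vertex) : (ap γ (v ++ w)).take v.length = ap γ v :=
  γ.2.2 v w

theorem length_ap (γ : TreeAut) (v : Vertex) : (ap γ v).length = v.length :=
  γ.2.1 v

theorem ap_mul (γ δ : TreeAut) (v : Vertex) : ap (γ * δ) v = ap γ (ap δ v) := rfl

theorem ker_levelHom_succ_le (n : ℕ) : (levelHom (n + 1)).ker ≤ (levelHom n).ker := by
  intro γ hγ
  rw [MonoidHom.mem_ker, levelHom_eq_one_iff] at hγ ⊢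
  intro w hw
  simpa [hγ (w ++ [false]) (by simp [hw])] using (ap_take (γ := γ) w [false]).symm

theorem exists_ap_append_singleton {γ : TreeAut} {w : Vertex} (hw : ap γ w = w) (b : Bool) :
    ∃ c, ap γ (w ++ [b]) = w ++ [c] := by
  have hlen : ((ap γ (w ++ [b])).drop w.length).length = 1 := by
    simp [length_ap]
  obtain ⟨c, hc⟩ := List.length_eq_one_iff.1 hlen
  exact ⟨c, by rw [← List.take_append_drop w.length (ap γ (w ++ [b])), ap_take, hw, hc]⟩

theorem sq_mem_ker_levelHom_succ {n : ℕ} {γ : TreeAut} (hγ : γ ∈ (levelHom n).ker) :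
    γ ^ 2 ∈ (levelHom (n + 1)).ker := by
  rw [MonoidHom.mem_ker, levelHom_eq_one_iff] at hγ ⊢
  intro v hv
  obtain ⟨w, b, rfl⟩ : ∃ w b, v = w ++ [b] :=
    ⟨v.dropLast, v.getLast (by rintro rfl; simp at hv),
      (List.dropLast_append_getLast _).symm⟩
  choose σ hσ using exists_ap_append_singleton (hγ w (by simpa using hv))
  have hσinj : Function.Injective σ := fun b c h => by
    have : w ++ [b] = w ++ [c] := γ.1.injective (show ap γ _ = ap γ _ by rw [hσ, hσ, h])
    simpa using this
  rw [sq, ap_mul, hσ, hσ, Bool.apply_apply_of_injective hσinj]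

theorem level_quotient_growth_general (G H : Subgroup TreeAut)
    (hnorm : ∀ g ∈ G, ∀ h ∈ H, g * h * g⁻¹ ∈ H)
    (hcyc : ∀ n : ℕ, 1 ≤ n → ∃ g ∈ Subgroup.map (levelHom n) G,
      ∀ x ∈ Subgroup.map (levelHom n) G, ∃ m : ℤ,
        x * (g ^ m)⁻¹ ∈ Subgroup.map (levelHom n) H) :
    ∀ n : ℕ, 1 ≤ n →
      (Subgroup.map (levelHom (n + 1)) H).relIndex (Subgroup.map (levelHom (n + 1)) G) ≤
        2 * (Subgroup.map (levelHom n) H).relIndex (Subgroup.map (levelHom n) G) := by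
  intro n _
  have hG : G ≤ normalizer (H : Set TreeAut) := le_normalizer_of_forall_conj_mem hnorm
  have := normal_subgroupOf_of_le_normalizer (le_normalizer_sup (N := (levelHom (n + 1)).ker) hG)
  have := isCyclic_quotient_sup_ker (levelHom (n + 1)) (hcyc (n + 1) n.succ_pos)
  rw [relIndex_map_map_eq_relIndex_sup_ker, relIndex_map_map_eq_relIndex_sup_ker]
  exact relIndex_sup_le_two_mul (ker_levelHom_succ_le n) (fun _ => sq_mem_ker_levelHom_succ) hG

/-- for closed subgroups `H ⊴ G ≤ Ω` with all level quotients
`G_n/H_n` cyclic, the order of `G_{n+1}/H_{n+1}` is at most twice that of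
`G_n/H_n`.  (Cyclicity of `G_n/H_n` is expressed by a single coset generating all
cosets; the order of `G_n/H_n` is `relindex H_n G_n`.) -/
theorem level_quotient_growth (G H : Subgroup TreeAut)
    (hGclosed : IsClosed (G : Set TreeAut)) (hHclosed : IsClosed (H : Set TreeAut))
    (hHG : H ≤ G) (hnorm : ∀ g ∈ G, ∀ h ∈ H, g * h * g⁻¹ ∈ H)
    (hcyc : ∀ n : ℕ, 1 ≤ n → ∃ g ∈ Subgroup.map (levelHom n) G,
      ∀ x ∈ Subgroup.map (levelHom n) G, ∃ m : ℤ,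
        x * (g ^ m)⁻¹ ∈ Subgroup.map (levelHom n) H) :
    ∀ n : ℕ, 1 ≤ n →
      (Subgroup.map (levelHom (n + 1)) H).relIndex (Subgroup.map (levelHom (n + 1)) G) ≤
        2 * (Subgroup.map (levelHom n) H).relIndex (Subgroup.map (levelHom n) G) :=
  level_quotient_growth_general G H hnorm hcyc

end BinTree
end
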